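/- Consider the weighted least-squares problem min_{x ∈ ℝ^{mn}} Σ_{ā ∈ {0,…,m−1}^n} p(ā) · ( Σ_{u=0}^{n−1} x_{u·m + a_u} − b(ā) )², where p is a strictly positive product distribution p(ā) = ∏_u p_u(a_u) and b: {0,…,m−1}^n → ℝ is arbitrary. Then for every function w: {(u,v) : u ∈ [n], v ∈ [m]} → ℝ, the vector x* given by x*_{um+v} = Σ_{ā} [ (p(ā)/p_u(a_u)) · b(ā) · 1[a_u = v] − ((n−1)/n) p(ā) b(ā) ] − (1/(mn)) Σ_{i'} w_{i'} + (1/m) Σ_{v'} w_{u m + v'} is a minimizer of the problem. -/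

import Mathlib

/-!
Under `P`, the additive part of `x*` is `∑ u, x*(u, a u) = ∑ u, E[b | a u] - (n - 1) E[b]`: the
`w`-terms cancel along every `a`. Since the coordinates are independent under the product
distribution `P`, the residual of this additive fit is `P`-orthogonal to every indicator
`1[a u = v]`, hence to every additive function `a ↦ ∑ u, y (u, a u)`, in particular to the
difference of two fits; the inequality is then Pythagoras in `L²(P)`.
-/

open Finset

theorem sum_mul_sq_sub_le_of_orthogonal {α : Type*} [Fintype α] {P f g b : α → ℝ}
    (hP : ∀ a, 0 ≤ P a) (horth : ∑ a, P a * (f a - b a) * (g a - f a) = 0) :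
    ∑ a, P a * (f a - b a) ^ 2 ≤ ∑ a, P a * (g a - b a) ^ 2 := by
  have hexpand : ∀ a, P a * (g a - b a) ^ 2 = P a * (f a - b a) ^ 2
      + 2 * (P a * (f a - b a) * (g a - f a)) + P a * (g a - f a) ^ 2 := fun a => by ring
  simp_rw [hexpand, sum_add_distrib, ← mul_sum, horth, mul_zero, add_zero]
  exact le_add_of_nonneg_right (sum_nonneg fun a _ => mul_nonneg (hP a) (sq_nonneg _))

section

variable {ι κ : Type*} [Fintype ι] [DecidableEq ι] [Fintype κ] {p : ι → κ → ℝ}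

theorem sum_prod_mul_apply (hp : ∀ i, ∑ t, p i t = 1) (u : ι) (f : κ → ℝ) :
    ∑ a : ι → κ, (∏ i, p i (a i)) * f (a u) = ∑ t, p u t * f t := by
  have hsplit : ∀ a : ι → κ, (∏ i, p i (a i)) * f (a u)
      = ∏ i, p i (a i) * (if i = u then f (a i) else 1) := fun a => by
    rw [prod_mul_distrib, prod_ite_eq', if_pos (mem_univ u)]
  simp_rw [hsplit]
  rw [← Fintype.prod_sum (fun i t => p i t * if i = u then f t else 1)]
  simp_rw [mul_ite, mul_one, sum_ite_irrel, hp, prod_ite_eq', if_pos (mem_univ u)]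

theorem sum_prod_mul_apply_mul_apply (hp : ∀ i, ∑ t, p i t = 1) {u u' : ι} (huu' : u ≠ u')
    (f g : κ → ℝ) :
    ∑ a : ι → κ, (∏ i, p i (a i)) * (f (a u) * g (a u'))
      = (∑ t, p u t * f t) * ∑ t, p u' t * g t := by
  have hsplit : ∀ a : ι → κ, (∏ i, p i (a i)) * (f (a u) * g (a u'))
      = ∏ i, p i (a i) * ((if i = u then f (a i) else 1) * (if i = u' then g (a i) else 1)) :=
    fun a => by
      rw [prod_mul_distrib, prod_mul_distrib, prod_ite_eq', prod_ite_eq', if_pos (mem_univ u),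
        if_pos (mem_univ u')]
  simp_rw [hsplit]
  rw [← Fintype.prod_sum
    (fun i t => p i t * ((if i = u then f t else 1) * (if i = u' then g t else 1)))]
  have hfactor : ∀ i, ∑ t, p i t * ((if i = u then f t else 1) * (if i = u' then g t else 1))
      = (if i = u then ∑ t, p u t * f t else 1)
        * (if i = u' then ∑ t, p u' t * g t else 1) := by
    intro i
    rcases eq_or_ne i u with rfl | hiu
    · simp [huu']
    · rcases eq_or_ne i u' with rfl | hiu'
      · simp [hiu]
      · simp [hiu, hiu', hp]
  simp_rw [hfactor, prod_mul_distrib, prod_ite_eq', if_pos (mem_univ _)]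

variable [DecidableEq κ]

theorem sum_mul_sum_apply_eq_zero {Q : (ι → κ) → ℝ}
    (hQ : ∀ u v, ∑ a, Q a * (if a u = v then 1 else 0) = 0) (y : ι × κ → ℝ) :
    ∑ a, Q a * ∑ u, y (u, a u) = 0 := by
  have hexpand : ∀ a : ι → κ, Q a * ∑ u, y (u, a u)
      = ∑ u, ∑ v, y (u, v) * (Q a * if a u = v then 1 else 0) := fun a => by
    simp_rw [mul_sum, mul_ite, mul_one, mul_zero, sum_ite_eq, if_pos (mem_univ _), mul_comm]
  simp_rw [hexpand]
  rw [sum_comm]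
  refine sum_eq_zero fun u _ => ?_
  rw [sum_comm]
  exact sum_eq_zero fun v _ => by rw [← mul_sum, hQ, mul_zero]

/-- `E[b | a u = t]` when `P` has `u`-th marginal `p u`. -/
noncomputable def coordCondMean (P : (ι → κ) → ℝ) (p : ι → κ → ℝ) (b : (ι → κ) → ℝ)
    (u : ι) (t : κ) : ℝ :=
  ∑ a, P a / p u (a u) * b a * if a u = t then 1 else 0

variable {P b : (ι → κ) → ℝ}

theorem mul_coordCondMean {u : ι} {t : κ} (ht : p u t ≠ 0) :
    p u t * coordCondMean P p b u t = ∑ a, P a * b a * if a u = t then 1 else 0 := by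
  rw [coordCondMean, mul_sum]
  refine sum_congr rfl fun a _ => ?_
  split_ifs with hat
  · rw [hat]; field_simp
  · simp

theorem sum_mul_coordCondMean (hp0 : ∀ i t, p i t ≠ 0) (u : ι) :
    ∑ t, p u t * coordCondMean P p b u t = ∑ a, P a * b a := by
  simp_rw [mul_coordCondMean (hp0 u _), mul_ite, mul_one, mul_zero]
  rw [sum_comm]
  simp_rw [sum_ite_eq, if_pos (mem_univ _)]

/-- For `i ≠ u`, independence gives `E[1[a u = v] E[b | a i]] = p u v E[b]`; the term `i = u`
gives `E[1[a u = v] b]`. -/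
theorem sum_mul_coordCondMean_residual_mul_indicator (hp0 : ∀ i t, p i t ≠ 0)
    (hp : ∀ i, ∑ t, p i t = 1) (hP : ∀ a, P a = ∏ i, p i (a i)) (u : ι) (v : κ) :
    ∑ a, P a * (∑ i, coordCondMean P p b i (a i)
        - ((Fintype.card ι : ℝ) - 1) * ∑ a', P a' * b a' - b a) * (if a u = v then 1 else 0)
      = 0 := by
  set B := ∑ a', P a' * b a'
  set T := ∑ a, P a * b a * if a u = v then 1 else 0
  have hexpand : ∀ a, P a * (∑ i, coordCondMean P p b i (a i)
        - ((Fintype.card ι : ℝ) - 1) * B - b a) * (if a u = v then 1 else 0)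
      = ∑ i, P a * ((if a u = v then 1 else 0) * coordCondMean P p b i (a i))
        - ((Fintype.card ι : ℝ) - 1) * B * (P a * if a u = v then 1 else 0)
        - P a * b a * if a u = v then 1 else 0 := fun a => by
    have hpull : ∑ i, P a * ((if a u = v then 1 else 0) * coordCondMean P p b i (a i))
        = P a * (∑ i, coordCondMean P p b i (a i)) * if a u = v then 1 else 0 := by
      rw [mul_sum, sum_mul]; exact sum_congr rfl fun i _ => by ring
    rw [hpull]; ring
  have hself : ∑ a, P a * ((if a u = v then 1 else 0) * coordCondMean P p b u (a u)) = T := by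
    simp_rw [hP]
    rw [sum_prod_mul_apply hp u (fun t => (if t = v then 1 else 0) * coordCondMean P p b u t)]
    simp only [ite_mul, one_mul, zero_mul, mul_ite, mul_zero, sum_ite_eq', mem_univ, if_true]
    exact mul_coordCondMean (hp0 u v)
  have hother : ∀ i ∈ univ.erase u,
      ∑ a, P a * ((if a u = v then 1 else 0) * coordCondMean P p b i (a i)) = p u v * B :=
    fun i hi => by
      simp_rw [hP]
      rw [sum_prod_mul_apply_mul_apply hp (ne_of_mem_erase hi).symm
        (fun t => if t = v then 1 else 0)]
      simp only [sum_mul_coordCondMean hp0, mul_ite, mul_one, mul_zero, sum_ite_eq', mem_univ,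
        if_true, B]
  have hmarg : ∑ a, P a * (if a u = v then 1 else 0) = p u v := by
    simp_rw [hP]
    rw [sum_prod_mul_apply hp u (fun t => if t = v then 1 else 0)]
    simp only [mul_ite, mul_one, mul_zero, sum_ite_eq', mem_univ, if_true]
  simp_rw [hexpand, sum_sub_distrib]
  rw [sum_comm, ← add_sum_erase _ _ (mem_univ u), hself, sum_congr rfl hother,
    sum_erase_eq_sub (mem_univ u), sum_const, card_univ, nsmul_eq_mul, ← mul_sum, hmarg]
  ring

end

theorem stmt2_general (n m : ℕ)
    (p : Fin n → Fin m → ℝ)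
    (hp_pos : ∀ u v, 0 < p u v)
    (hp_sum : ∀ u, ∑ v, p u v = 1)
    (P : (Fin n → Fin m) → ℝ)
    (hP : ∀ a, P a = ∏ u, p u (a u))
    (b : (Fin n → Fin m) → ℝ)
    (w : Fin n × Fin m → ℝ)
    (xstar : Fin n × Fin m → ℝ)
    (hx : ∀ u v, xstar (u, v) =
      (∑ a : Fin n → Fin m,
        ((P a / p u (a u)) * b a * (if a u = v then 1 else 0)
          - ((n : ℝ) - 1) / n * (P a * b a)))
        - (1 / (m * n)) * ∑ i : Fin n × Fin m, w i
        + (1 / m) * ∑ v' : Fin m, w (u, v')) :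
    ∀ x : Fin n × Fin m → ℝ,
      ∑ a : Fin n → Fin m, P a * ((∑ u, xstar (u, a u)) - b a) ^ 2
        ≤ ∑ a : Fin n → Fin m, P a * ((∑ u, x (u, a u)) - b a) ^ 2 := by
  intro x
  refine sum_mul_sq_sub_le_of_orthogonal
    (fun a => (hP a).symm ▸ prod_nonneg fun u _ => (hp_pos u _).le) ?_
  simp_rw [← sum_sub_distrib]
  refine sum_mul_sum_apply_eq_zero (fun u v => ?_) (fun i => x i - xstar i)
  have hn : (n : ℝ) ≠ 0 := Nat.cast_ne_zero.2 (Fin.pos u).ne'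
  have hxstar_apply : ∀ u t, xstar (u, t) = coordCondMean P p b u t
      - ((n : ℝ) - 1) / n * ∑ a, P a * b a
      - (1 / (m * n)) * ∑ i : Fin n × Fin m, w i + (1 / m) * ∑ v' : Fin m, w (u, v') :=
    fun u t => by rw [hx, sum_sub_distrib, ← mul_sum]; rfl
  have hxstar : ∀ a : Fin n → Fin m, ∑ u, xstar (u, a u)
      = ∑ u, coordCondMean P p b u (a u) - ((n : ℝ) - 1) * ∑ a, P a * b a := fun a => by
    simp_rw [hxstar_apply, sum_add_distrib, sum_sub_distrib, sum_const, card_univ,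
      Fintype.card_fin, nsmul_eq_mul, ← mul_sum, ← Fintype.sum_prod_type']
    field_simp
    ring
  simp_rw [hxstar]
  simpa using
    sum_mul_coordCondMean_residual_mul_indicator (fun u v => (hp_pos u v).ne') hp_sum hP u v

/-- The closed-form vector `x*` (for any residue vector `w`) minimizes the
`p`-weighted least-squares objective over additively factorized values. -/
theorem stmt2 (n m : ℕ) (hn : 0 < n) (hm : 0 < m)
    (p : Fin n → Fin m → ℝ)
    (hp_pos : ∀ u v, 0 < p u v)
    (hp_sum : ∀ u, ∑ v, p u v = 1)
    (P : (Fin n → Fin m) → ℝ)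
    (hP : ∀ a, P a = ∏ u, p u (a u))
    (b : (Fin n → Fin m) → ℝ)
    (w : Fin n × Fin m → ℝ)
    (xstar : Fin n × Fin m → ℝ)
    (hx : ∀ u v, xstar (u, v) =
      (∑ a : Fin n → Fin m,
        ((P a / p u (a u)) * b a * (if a u = v then 1 else 0)
          - ((n : ℝ) - 1) / n * (P a * b a)))
        - (1 / (m * n)) * ∑ i : Fin n × Fin m, w i
        + (1 / m) * ∑ v' : Fin m, w (u, v')) :
    ∀ x : Fin n × Fin m → ℝ,
      ∑ a : Fin n → Fin m, P a * ((∑ u, xstar (u, a u)) - b a) ^ 2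
        ≤ ∑ a : Fin n → Fin m, P a * ((∑ u, x (u, a u)) - b a) ^ 2 :=
  stmt2_general n m p hp_pos hp_sum P hP b w xstar hx
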